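/- arXiv:2604.02505 — 2 statements merged into one kernel-verified Lean document; each statement's English description precedes it below -/
import Mathlib

section
/- Let A and B be positive definite symmetric n×n matrices with A ⪯ B. Then tr((B^{-1/2} − A^{-1/2}) B^{1/2} (B^{-1/2} − A^{-1/2}) A) ≤ tr(B^{1/2}) − tr(A^{1/2}). -/
open Matrix
open scoped Classical

/-- The positive semidefinite square root of a matrix (zero if not PSD). -/
noncomputable def sqrtM {n : ℕ} (A : Matrix (Fin n) (Fin n) ℝ) : Matrix (Fin n) (Fin n) ℝ :=
  if h : A.PosSemidef then
    (h.1.eigenvectorUnitary : Matrix (Fin n) (Fin n) ℝ) *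
      diagonal ((↑) ∘ (√·) ∘ h.1.eigenvalues) *
      (star h.1.eigenvectorUnitary : Matrix (Fin n) (Fin n) ℝ)
  else 0

/-- Euclidean norm of a vector. -/
noncomputable def euclNorm {n : ℕ} (v : Fin n → ℝ) : ℝ := Real.sqrt (v ⬝ᵥ v)

/-- The ℓ₂ operator (spectral) norm of a matrix. -/
noncomputable def opNorm {n : ℕ} (A : Matrix (Fin n) (Fin n) ℝ) : ℝ :=
  ⨆ u : {u : Fin n → ℝ // euclNorm u ≤ 1}, euclNorm (A *ᵥ u)


/-!
Write `S = B^{1/2}` and `T = A^{1/2}`. Expanding the product, the left-hand side equals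
`tr S - tr T - tr ((T⁻¹ - S⁻¹) A)`. Now `A ≤ B` gives `T ≤ S` (operator monotonicity of the
square root, via an eigenvector of `S - T`), hence `S⁻¹ ≤ T⁻¹`, and the trace of a product of
two positive semidefinite matrices is nonnegative.
-/

open scoped MatrixOrder ComplexOrder

namespace Matrix

variable {ι 𝕜 : Type*} [Fintype ι] [RCLike 𝕜]

theorem le_of_mul_self_le_mul_self {S T : Matrix ι ι 𝕜} (hS : 0 ≤ S) (hT : 0 ≤ T)
    (h : S * S ≤ T * T) : S ≤ T := by
  classical
  have hD : (T - S).IsHermitian := hT.posSemidef.1.sub hS.posSemidef.1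
  rw [le_iff, hD.posSemidef_iff_eigenvalues_nonneg]
  intro i
  by_contra! hμ
  rw [Pi.zero_apply] at hμ
  set μ := hD.eigenvalues i
  set v : ι → 𝕜 := ⇑(hD.eigenvectorBasis i)
  have hv : v ≠ 0 := fun h0 =>
    hD.eigenvectorBasis.orthonormal.ne_zero i (by ext j; simpa using congrFun h0 j)
  have hDv : (T - S) *ᵥ v = μ • v := hD.mulVec_eigenvectorBasis i
  have hvD : star v ᵥ* (T - S) = μ • star v := by
    conv_lhs => rw [← hD.eq]
    rw [← star_mulVec, hDv, star_smul, star_trivial]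
  -- `T² - S² = T (T - S) + (T - S) S`, and `T - S` acts on `v` from both sides as `μ`.
  have hq : star v ⬝ᵥ (T * T - S * S) *ᵥ v =
      (μ : 𝕜) * (star v ⬝ᵥ T *ᵥ v + star v ⬝ᵥ S *ᵥ v) := by
    rw [show T * T - S * S = T * (T - S) + (T - S) * S by noncomm_ring, add_mulVec,
      dotProduct_add, ← mulVec_mulVec, ← mulVec_mulVec, hDv, dotProduct_mulVec _ (T - S), hvD,
      mulVec_smul, dotProduct_smul, smul_dotProduct, ← smul_add, RCLike.real_smul_eq_coe_mul]
  have hqT := hT.posSemidef.dotProduct_mulVec_nonneg v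
  have hqS := hS.posSemidef.dotProduct_mulVec_nonneg v
  have hsum : star v ⬝ᵥ T *ᵥ v + star v ⬝ᵥ S *ᵥ v = 0 := by
    have hle : (μ : 𝕜) * (star v ⬝ᵥ T *ᵥ v + star v ⬝ᵥ S *ᵥ v) ≤ 0 :=
      mul_nonpos_of_nonpos_of_nonneg (RCLike.ofReal_nonpos.mpr hμ.le) (add_nonneg hqT hqS)
    have h0 := le_antisymm hle (hq ▸ (le_iff.mp h).dotProduct_mulVec_nonneg v)
    exact (mul_eq_zero.mp h0).resolve_left (RCLike.ofReal_ne_zero.mpr hμ.ne)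
  obtain ⟨hT0, hS0⟩ := (add_eq_zero_iff_of_nonneg hqT hqS).mp hsum
  have hμv : μ • v = 0 := by
    rw [← hDv, sub_mulVec, (hT.posSemidef.dotProduct_mulVec_zero_iff v).mp hT0,
      (hS.posSemidef.dotProduct_mulVec_zero_iff v).mp hS0, sub_zero]
  exact hv ((smul_eq_zero.mp hμv).resolve_left hμ.ne)

theorem PosSemidef.trace_mul_nonneg {M P : Matrix ι ι 𝕜} (hM : M.PosSemidef)
    (hP : P.PosSemidef) : 0 ≤ (M * P).trace := by
  obtain ⟨C, rfl⟩ := CStarAlgebra.nonneg_iff_eq_star_mul_self.mp hM.nonneg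
  rw [Matrix.mul_assoc, trace_mul_comm]
  exact (hP.mul_mul_conjTranspose_same C).trace_nonneg

variable [DecidableEq ι]

theorem sqrt_le_sqrt {A B : Matrix ι ι 𝕜} (hA : 0 ≤ A) (h : A ≤ B) :
    CFC.sqrt A ≤ CFC.sqrt B := by
  have hB : 0 ≤ B := hA.trans h
  refine le_of_mul_self_le_mul_self (CFC.sqrt_nonneg A) (CFC.sqrt_nonneg B) ?_
  rwa [CFC.sqrt_mul_sqrt_self A, CFC.sqrt_mul_sqrt_self B]

theorem inv_le_inv_of_le {X Y : Matrix ι ι 𝕜} (hX : X.PosDef) (h : X ≤ Y) : Y⁻¹ ≤ X⁻¹ := by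
  have hY : Y.PosDef := by simpa using hX.add_posSemidef (le_iff.mp h)
  have := hX.inv.isUnit.invertible
  have := hY.isUnit.invertible
  -- the two Schur complements of `fromBlocks Y 1 1 X⁻¹` are `Y - X` and `X⁻¹ - Y⁻¹`
  have hblock : (fromBlocks Y 1 1ᴴ X⁻¹).PosSemidef := by
    rw [PosDef.fromBlocks₂₂ _ _ hX.inv]
    simpa [nonsing_inv_nonsing_inv X ((isUnit_iff_isUnit_det X).mp hX.isUnit)] using le_iff.mp h
  rw [PosDef.fromBlocks₁₁ _ _ hY] at hblock
  exact le_iff.mpr (by simpa using hblock)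

theorem trace_inv_sub_inv_mul_mul_inv_sub_inv_mul {R : Type*} [CommRing R]
    {S T A : Matrix ι ι R} (hS : IsUnit S.det) (hT : IsUnit T.det) (hA : T * T = A) :
    ((S⁻¹ - T⁻¹) * S * (S⁻¹ - T⁻¹) * A).trace =
      S.trace - T.trace - ((T⁻¹ - S⁻¹) * A).trace := by
  subst hA
  have hexpand : (S⁻¹ - T⁻¹) * S * (S⁻¹ - T⁻¹) * (T * T) =
      S⁻¹ * (T * T) - T - (T - T⁻¹ * (S * T)) := by
    simp only [Matrix.sub_mul, Matrix.mul_sub, Matrix.mul_assoc,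
      nonsing_inv_mul_cancel_left _ _ hS, mul_nonsing_inv_cancel_left _ _ hS,
      nonsing_inv_mul_cancel_left _ _ hT]
  have htrace_conj : (T⁻¹ * (S * T)).trace = S.trace := by
    rw [trace_mul_comm, Matrix.mul_assoc, mul_nonsing_inv _ hT, Matrix.mul_one]
  rw [hexpand, Matrix.sub_mul, nonsing_inv_mul_cancel_left _ _ hT]
  simp only [trace_sub, htrace_conj]
  abel

end Matrix

theorem sqrtM_eq_sqrt {n : ℕ} {A : Matrix (Fin n) (Fin n) ℝ} (hA : A.PosSemidef) :
    sqrtM A = CFC.sqrt A := by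
  rw [sqrtM, dif_pos hA, CFC.sqrt_eq_cfc, cfc_nnreal_eq_real _ A, hA.1.cfc_eq, IsHermitian.cfc,
    Unitary.conjStarAlgAut_apply]
  congr 3
  ext i
  simp [hA.eigenvalues_nonneg i]

theorem core_trace_inequality {n : ℕ} {A B : Matrix (Fin n) (Fin n) ℝ}
    (hA : A.PosDef) (hB : B.PosDef) (hAB : (B - A).PosSemidef) :
    ((((sqrtM B)⁻¹ - (sqrtM A)⁻¹) * sqrtM B * ((sqrtM B)⁻¹ - (sqrtM A)⁻¹)) * A).trace
      ≤ (sqrtM B).trace - (sqrtM A).trace := by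
  rw [sqrtM_eq_sqrt hA.posSemidef, sqrtM_eq_sqrt hB.posSemidef]
  have hT : (CFC.sqrt A).PosDef := hA.isStrictlyPositive.sqrt.posDef
  have hS : (CFC.sqrt B).PosDef := hB.isStrictlyPositive.sqrt.posDef
  have hinv_le : (CFC.sqrt B)⁻¹ ≤ (CFC.sqrt A)⁻¹ :=
    inv_le_inv_of_le hT (sqrt_le_sqrt hA.posSemidef.nonneg hAB)
  have htrace := (le_iff.mp hinv_le).trace_mul_nonneg hA.posSemidef
  rw [trace_inv_sub_inv_mul_mul_inv_sub_inv_mul hS.det_pos.ne'.isUnit hT.det_pos.ne'.isUnit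
    (CFC.sqrt_mul_sqrt_self A)]
  linarith
end

section
/- Smoothness of the dual regularizer: let S be a positive definite symmetric n×n matrix, η > 0, and Ψ*(m) = η tr(√(mm^T + S)). Then for all m, m' ∈ ℝ^n, the Bregman divergence satisfies B_{Ψ*}(m; m') := Ψ*(m) − Ψ*(m') − ⟨∇Ψ*(m'), m − m'⟩ ≤ (η/2) ‖m − m'‖²_{S^{-1/2}}, where ‖x‖²_H = ⟨x, Hx⟩ and ∇Ψ*(m) = η (mm^T + S)^{-1/2} m. -/
open Matrix
open scoped Classical

/-!
Put `A = m mᵀ + S`, `A' = m' m'ᵀ + S` and `Q = √A'`. Expanding `0 ≤ tr((√A - Q) Q⁻¹ (√A - Q))`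
gives the matrix AM–GM inequality `2 tr √A ≤ tr(A Q⁻¹) + tr Q`; since `tr(A' Q⁻¹) = tr Q` and
`A - A' = m mᵀ - m' m'ᵀ`, this says `tr √A - tr Q ≤ (mᵀQ⁻¹m - m'ᵀQ⁻¹m') / 2`, i.e. the Bregman
divergence is at most `½ ‖m - m'‖²_{Q⁻¹}`. Finally `Q² = A' ≥ S`, so `Q ≥ √S` by operator
monotonicity of the square root, and inversion reverses the order: `Q⁻¹ ≤ (√S)⁻¹`.
-/

open scoped MatrixOrder

namespace Matrix

theorem PosSemidef.sqrtM_eq_sqrt {n : ℕ} {A : Matrix (Fin n) (Fin n) ℝ} (hA : A.PosSemidef) :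
    sqrtM A = CFC.sqrt A := by
  rw [sqrtM, dif_pos hA, CFC.sqrt_eq_cfc, cfc_nnreal_eq_real _ A, hA.1.cfc_eq, IsHermitian.cfc,
    Unitary.conjStarAlgAut_apply]
  congr 3
  funext i
  simp [max_eq_left (hA.eigenvalues_nonneg i)]

theorem PosSemidef.sqrtM_mul_self {n : ℕ} {A : Matrix (Fin n) (Fin n) ℝ} (hA : A.PosSemidef) :
    sqrtM A * sqrtM A = A := by
  rw [hA.sqrtM_eq_sqrt, CFC.sqrt_mul_sqrt_self A hA.nonneg]

theorem PosSemidef.posSemidef_sqrtM {n : ℕ} {A : Matrix (Fin n) (Fin n) ℝ} (hA : A.PosSemidef) :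
    (sqrtM A).PosSemidef := by
  rw [hA.sqrtM_eq_sqrt]
  exact (CFC.sqrt_nonneg A).posSemidef

theorem PosDef.posDef_sqrtM {n : ℕ} {A : Matrix (Fin n) (Fin n) ℝ} (hA : A.PosDef) :
    (sqrtM A).PosDef := by
  rw [hA.posSemidef.sqrtM_eq_sqrt]
  exact hA.isStrictlyPositive.sqrt.posDef

variable {ι : Type*} [Fintype ι]

theorem trace_vecMulVec_self_mul (v : ι → ℝ) (P : Matrix ι ι ℝ) :
    (vecMulVec v v * P).trace = v ⬝ᵥ (P *ᵥ v) := by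
  rw [vecMulVec_mul, trace_vecMulVec, dotProduct_mulVec, dotProduct_comm]

theorem IsHermitian.dotProduct_mulVec_comm {P : Matrix ι ι ℝ} (hP : P.IsHermitian)
    (x y : ι → ℝ) : x ⬝ᵥ (P *ᵥ y) = (P *ᵥ x) ⬝ᵥ y := by
  rw [dotProduct_mulVec, ← mulVec_transpose, ← conjTranspose_eq_transpose_of_trivial, hP.eq]

theorem sub_dotProduct_mulVec_sub {P : Matrix ι ι ℝ} (hP : P.IsHermitian) (x y : ι → ℝ) :
    (x - y) ⬝ᵥ (P *ᵥ (x - y))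
      = x ⬝ᵥ (P *ᵥ x) - y ⬝ᵥ (P *ᵥ y) - 2 * ((P *ᵥ y) ⬝ᵥ (x - y)) := by
  simp only [mulVec_sub, dotProduct_sub, sub_dotProduct, hP.dotProduct_mulVec_comm y x,
    dotProduct_comm x (P *ᵥ y), dotProduct_comm y (P *ᵥ y)]
  ring

variable [DecidableEq ι]

theorem two_mul_trace_le_trace_mul_self_mul_inv_add_trace {R Q : Matrix ι ι ℝ}
    (hR : R.IsHermitian) (hQ : Q.PosDef) :
    2 * R.trace ≤ (R * R * Q⁻¹).trace + Q.trace := by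
  have hdet := (isUnit_iff_isUnit_det Q).mp hQ.isUnit
  have hsq := (hQ.inv.posSemidef.mul_mul_conjTranspose_same (R - Q)).trace_nonneg
  rw [conjTranspose_sub, hR.eq, hQ.1.eq] at hsq
  have expand : (R - Q) * Q⁻¹ * (R - Q) = R * Q⁻¹ * R - R - R + Q := by
    simp only [sub_mul, mul_sub, Matrix.mul_assoc, Q.mul_nonsing_inv hdet,
      Q.nonsing_inv_mul hdet, Matrix.mul_one, Matrix.one_mul]
    abel
  rw [expand, trace_add, trace_sub, trace_sub, trace_mul_cycle] at hsq
  linarith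

/-- With `u = Q⁻¹ d` and `w = R⁻¹ d`, `0 ≤ (u - w)ᵀ R (u - w) ≤ dᵀR⁻¹d - dᵀQ⁻¹d`. -/
theorem dotProduct_inv_mulVec_le_of_le {Q R : Matrix ι ι ℝ} (hR : R.PosDef) (hRQ : R ≤ Q)
    (d : ι → ℝ) : d ⬝ᵥ (Q⁻¹ *ᵥ d) ≤ d ⬝ᵥ (R⁻¹ *ᵥ d) := by
  have hQ : Q.PosDef := add_sub_cancel R Q ▸ hR.add_posSemidef (le_iff.mp hRQ)
  set u := Q⁻¹ *ᵥ d
  set w := R⁻¹ *ᵥ d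
  have hQu : Q *ᵥ u = d := by
    rw [mulVec_mulVec, Q.mul_nonsing_inv ((isUnit_iff_isUnit_det Q).mp hQ.isUnit), one_mulVec]
  have hRw : R *ᵥ w = d := by
    rw [mulVec_mulVec, R.mul_nonsing_inv ((isUnit_iff_isUnit_det R).mp hR.isUnit), one_mulVec]
  have hsq := hR.posSemidef.dotProduct_mulVec_nonneg (u - w)
  have hle := (le_iff.mp hRQ).dotProduct_mulVec_nonneg u
  simp only [star_trivial] at hsq hle
  rw [sub_dotProduct_mulVec_sub hR.1, hRw, dotProduct_sub, dotProduct_comm d u,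
    dotProduct_comm d w] at hsq
  rw [sub_mulVec, dotProduct_sub, hQu] at hle
  rw [dotProduct_comm d u, dotProduct_comm d w]
  linarith

/-- Operator monotonicity of the square root. On an eigenvector `u` of `Q - R` with eigenvalue
`λ`, `0 ≤ uᵀ(Q² - R²)u = λ uᵀ(Q + R)u`, and `uᵀ(Q + R)u > 0`. -/
theorem le_of_mul_self_le_mul_self_s10 {Q R : Matrix ι ι ℝ} (hQ : Q.PosSemidef) (hR : R.PosDef)
    (h : R * R ≤ Q * Q) : R ≤ Q := by
  have hX : (Q - R).IsHermitian := hQ.1.sub hR.1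
  refine le_iff.mpr (hX.posSemidef_iff_eigenvalues_nonneg.mpr fun i => ?_)
  set u : ι → ℝ := ⇑(hX.eigenvectorBasis i)
  have hXu : (Q - R) *ᵥ u = hX.eigenvalues i • u := hX.mulVec_eigenvectorBasis i
  have hu : u ≠ 0 := fun h0 =>
    hX.eigenvectorBasis.orthonormal.ne_zero i (by ext j; exact congrFun h0 j)
  have key := (le_iff.mp h).dotProduct_mulVec_nonneg u
  have hsplit : Q * Q - R * R = Q * (Q - R) + (Q - R) * R := by noncomm_ring
  rw [star_trivial, hsplit, add_mulVec, dotProduct_add, ← mulVec_mulVec, ← mulVec_mulVec,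
    hX.dotProduct_mulVec_comm u, hXu, mulVec_smul, dotProduct_smul, smul_dotProduct,
    smul_eq_mul, smul_eq_mul, ← mul_add] at key
  have hQu := hQ.dotProduct_mulVec_nonneg u
  have hRu := hR.dotProduct_mulVec_pos hu
  simp only [star_trivial] at hQu hRu
  exact nonneg_of_mul_nonneg_left key (by linarith)

end Matrix

theorem leon_dual_smoothness {n : ℕ} {S : Matrix (Fin n) (Fin n) ℝ}
    (hS : S.PosDef) {η : ℝ} (hη : 0 < η) (m m' : Fin n → ℝ) :
    η * (sqrtM (vecMulVec m m + S)).trace - η * (sqrtM (vecMulVec m' m' + S)).trace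
      - (η • ((sqrtM (vecMulVec m' m' + S))⁻¹ *ᵥ m')) ⬝ᵥ (m - m')
    ≤ η / 2 * ((m - m') ⬝ᵥ ((sqrtM S)⁻¹ *ᵥ (m - m'))) := by
  have hvv (v : Fin n → ℝ) : (vecMulVec v v).PosSemidef := by
    simpa using posSemidef_vecMulVec_self_star v
  have hA := PosDef.posSemidef_add (hvv m) hS
  have hA' := PosDef.posSemidef_add (hvv m') hS
  set Q := sqrtM (vecMulVec m' m' + S)
  have hQ : Q.PosDef := hA'.posDef_sqrtM
  have hamgm := two_mul_trace_le_trace_mul_self_mul_inv_add_trace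
    hA.posSemidef.posSemidef_sqrtM.1 hQ
  have htrQ : ((vecMulVec m' m' + S) * Q⁻¹).trace = Q.trace := by
    rw [← hA'.posSemidef.sqrtM_mul_self, Matrix.mul_assoc,
      Q.mul_nonsing_inv ((isUnit_iff_isUnit_det Q).mp hQ.isUnit), Matrix.mul_one]
  rw [hA.posSemidef.sqrtM_mul_self, add_mul, trace_add, trace_vecMulVec_self_mul] at hamgm
  rw [add_mul, trace_add, trace_vecMulVec_self_mul] at htrQ
  have hSQ : sqrtM S ≤ Q := by
    refine le_of_mul_self_le_mul_self_s10 hA'.posSemidef.posSemidef_sqrtM hS.posDef_sqrtM ?_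
    rw [hS.posSemidef.sqrtM_mul_self, hA'.posSemidef.sqrtM_mul_self]
    exact le_add_of_nonneg_left (hvv m').nonneg
  have hinv := dotProduct_inv_mulVec_le_of_le hS.posDef_sqrtM hSQ (m - m')
  have hpolar := sub_dotProduct_mulVec_sub hQ.inv.1 m m'
  have hbregman : (sqrtM (vecMulVec m m + S)).trace - Q.trace - (Q⁻¹ *ᵥ m') ⬝ᵥ (m - m')
      ≤ (m - m') ⬝ᵥ ((sqrtM S)⁻¹ *ᵥ (m - m')) / 2 := by
    linarith
  rw [smul_dotProduct, smul_eq_mul]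
  linarith [mul_le_mul_of_nonneg_left hbregman hη.le]
end
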